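/- For a parameterized Markov chain on a nonempty finite state space S, the number of distinct communicating classes is at most 2|S| − 1. -/
import Mathlib


open scoped BigOperators Classical
open Filter

/-- Iterates whose supremum is the reachability probability. -/
noncomputable def reachAux {S : Type*} [Fintype S]
    (P : S → S → ℝ) (t : S) : ℕ → S → ℝ
  | 0, x => if x = t then 1 else 0
  | n + 1, x => if x = t then 1 else ∑ y, P x y * reachAux P t n y

/-- Reachability probability of target `t` starting from `s` in the Markov chain `P`. -/
noncomputable def ReachProb {S : Type*} [Fintype S]
    (P : S → S → ℝ) (t s : S) : ℝ :=
  ⨆ n : ℕ, reachAux P t n s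

/-- Iterates whose supremum is the probability of leaving `B` strictly before
visiting `s'`. -/
noncomputable def exitBeforeAux {S : Type*} [Fintype S]
    (P : S → S → ℝ) (B : Set S) (s' : S) : ℕ → S → ℝ
  | 0, x => if x ∉ B then 1 else 0
  | n + 1, x => if x ∉ B then 1 else if x = s' then 0
      else ∑ y, P x y * exitBeforeAux P B s' n y

/-- Probability of leaving `B` strictly before visiting `s'`, starting from `s`. -/
noncomputable def ExitBefore {S : Type*} [Fintype S]
    (P : S → S → ℝ) (B : Set S) (s' s : S) : ℝ :=
  ⨆ n : ℕ, exitBeforeAux P B s' n s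


section bounds
variable {S : Type*} [Fintype S] {P : S → S → ℝ}

lemma reachAux_nonneg (hnn : ∀ a b, 0 ≤ P a b) (t : S) :
    ∀ n z, 0 ≤ reachAux P t n z := by
  intro n
  induction n with
  | zero => intro z; simp only [reachAux]; split <;> norm_num
  | succ n ih =>
    intro z; simp only [reachAux]; split
    · norm_num
    · exact Finset.sum_nonneg fun w _ => mul_nonneg (hnn z w) (ih w)

lemma reachAux_le_one (hnn : ∀ a b, 0 ≤ P a b) (hrow : ∀ a, ∑ b, P a b = 1)
    (t : S) : ∀ n z, reachAux P t n z ≤ 1 := by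
  intro n
  induction n with
  | zero => intro z; simp only [reachAux]; split <;> norm_num
  | succ n ih =>
    intro z; simp only [reachAux]; split
    · norm_num
    · calc ∑ y, P z y * reachAux P t n y ≤ ∑ y, P z y * 1 :=
            Finset.sum_le_sum fun w _ => mul_le_mul_of_nonneg_left (ih w) (hnn z w)
        _ = 1 := by simp [hrow z]

lemma exitBeforeAux_nonneg (hnn : ∀ a b, 0 ≤ P a b) (B : Set S) (s' : S) :
    ∀ n z, 0 ≤ exitBeforeAux P B s' n z := by
  intro n
  induction n with
  | zero => intro z; simp only [exitBeforeAux]; split <;> norm_num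
  | succ n ih =>
    intro z; simp only [exitBeforeAux]; split
    · norm_num
    · split
      · norm_num
      · exact Finset.sum_nonneg fun w _ => mul_nonneg (hnn z w) (ih w)

lemma exitBeforeAux_le_one (hnn : ∀ a b, 0 ≤ P a b) (hrow : ∀ a, ∑ b, P a b = 1)
    (B : Set S) (s' : S) : ∀ n z, exitBeforeAux P B s' n z ≤ 1 := by
  intro n
  induction n with
  | zero => intro z; simp only [exitBeforeAux]; split <;> norm_num
  | succ n ih =>
    intro z; simp only [exitBeforeAux]; split
    · norm_num
    · split
      · norm_num
      · calc ∑ y, P z y * exitBeforeAux P B s' n y ≤ ∑ y, P z y * 1 :=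
              Finset.sum_le_sum fun w _ => mul_le_mul_of_nonneg_left (ih w) (hnn z w)
          _ = 1 := by simp [hrow z]

lemma reachAux_le_sum (hnn : ∀ a b, 0 ≤ P a b) (hrow : ∀ a, ∑ b, P a b = 1)
    {B₁ B₂ : Set S} {x y : S} (hx2 : x ∉ B₂) (hy1 : y ∉ B₁) :
    ∀ n z, reachAux P x n z ≤
      exitBeforeAux P B₁ x n z + exitBeforeAux P B₂ y n z := by
  intro n
  induction n with
  | zero =>
    intro z
    by_cases hzx : z = x
    · have h2 : exitBeforeAux P B₂ y 0 z = 1 := by rw [hzx]; simp [exitBeforeAux, hx2]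
      have h1 : (0:ℝ) ≤ exitBeforeAux P B₁ x 0 z := exitBeforeAux_nonneg hnn _ _ 0 z
      have hr : reachAux P x 0 z = 1 := by simp [reachAux, hzx]
      linarith
    · have : reachAux P x 0 z = 0 := by simp [reachAux, hzx]
      rw [this]
      exact add_nonneg (exitBeforeAux_nonneg hnn _ _ 0 z) (exitBeforeAux_nonneg hnn _ _ 0 z)
  | succ n ih =>
    intro z
    by_cases hzx : z = x
    · have h2 : exitBeforeAux P B₂ y (n+1) z = 1 := by rw [hzx]; simp [exitBeforeAux, hx2]
      have h1 : (0:ℝ) ≤ exitBeforeAux P B₁ x (n+1) z := exitBeforeAux_nonneg hnn _ _ _ z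
      have hr : reachAux P x (n+1) z = 1 := by simp [reachAux, hzx]
      linarith
    · have hrle : reachAux P x (n+1) z ≤ 1 := reachAux_le_one hnn hrow x (n+1) z
      by_cases hz1 : z ∈ B₁
      · by_cases hz2 : z ∈ B₂
        · have hzy : z ≠ y := fun h => hy1 (h ▸ hz1)
          have hr : reachAux P x (n+1) z = ∑ w, P z w * reachAux P x n w := by
            simp [reachAux, hzx]
          have h1 : exitBeforeAux P B₁ x (n+1) z = ∑ w, P z w * exitBeforeAux P B₁ x n w := by
            simp [exitBeforeAux, hz1, hzx]
          have h2 : exitBeforeAux P B₂ y (n+1) z = ∑ w, P z w * exitBeforeAux P B₂ y n w := by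
            simp [exitBeforeAux, hz2, hzy]
          rw [hr, h1, h2, ← Finset.sum_add_distrib]
          refine Finset.sum_le_sum fun w _ => ?_
          rw [← mul_add]
          exact mul_le_mul_of_nonneg_left (ih w) (hnn z w)
        · have h2 : exitBeforeAux P B₂ y (n+1) z = 1 := by simp [exitBeforeAux, hz2]
          have h1 : (0:ℝ) ≤ exitBeforeAux P B₁ x (n+1) z := exitBeforeAux_nonneg hnn _ _ _ z
          linarith
      · have h1 : exitBeforeAux P B₁ x (n+1) z = 1 := by simp [exitBeforeAux, hz1]
        have h2 : (0:ℝ) ≤ exitBeforeAux P B₂ y (n+1) z := exitBeforeAux_nonneg hnn _ _ _ z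
        linarith

lemma ReachProb_le_add (hnn : ∀ a b, 0 ≤ P a b) (hrow : ∀ a, ∑ b, P a b = 1)
    {B₁ B₂ : Set S} {x y : S} (hx2 : x ∉ B₂) (hy1 : y ∉ B₁) (s : S) :
    ReachProb P x s ≤ ExitBefore P B₁ x s + ExitBefore P B₂ y s := by
  have bdd1 : BddAbove (Set.range fun n => exitBeforeAux P B₁ x n s) := by
    refine ⟨1, ?_⟩; rintro _ ⟨n, rfl⟩; exact exitBeforeAux_le_one hnn hrow _ _ n s
  have bdd2 : BddAbove (Set.range fun n => exitBeforeAux P B₂ y n s) := by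
    refine ⟨1, ?_⟩; rintro _ ⟨n, rfl⟩; exact exitBeforeAux_le_one hnn hrow _ _ n s
  refine ciSup_le fun n => ?_
  exact (reachAux_le_sum hnn hrow hx2 hy1 n s).trans
    (add_le_add (le_ciSup bdd1 n) (le_ciSup bdd2 n))

end bounds

lemma laminar_card {S : Type*} [DecidableEq S] :
    ∀ n (F : Finset (Finset S)), F.card ≤ n → F.Nonempty →
    (∀ A ∈ F, A.Nonempty) →
    (∀ A ∈ F, ∀ B ∈ F, A ⊆ B ∨ B ⊆ A ∨ Disjoint A B) →
    (insert (F.sup id) F).card ≤ 2 * (F.sup id).card - 1 := by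
  intro n
  induction n with
  | zero =>
    intro F hc hne _ _
    exact absurd (Finset.card_pos.mpr hne) (by omega)
  | succ n ih =>
    intro F hc hne h0 hlam
    obtain ⟨M, hM, hMmax⟩ := F.exists_max_image Finset.card hne
    have hMne : M.Nonempty := h0 M hM
    have hMc : 1 ≤ M.card := Finset.card_pos.mpr hMne
    set G := F.filter (fun A => A ⊆ M) with hGdef
    set H := F \ G with hHdef
    have hMG : M ∈ G := Finset.mem_filter.mpr ⟨hM, le_refl M⟩
    have hGc : 1 ≤ G.card := Finset.card_pos.mpr ⟨M, hMG⟩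
    have hGsubF : G ⊆ F := Finset.filter_subset _ _
    have hGH : H.card + G.card = F.card := Finset.card_sdiff_add_card_eq_card hGsubF
    have hGsub : ∀ A ∈ G, A ∈ F := fun A hA => hGsubF hA
    have hHsub : ∀ A ∈ H, A ∈ F := fun A hA => (Finset.mem_sdiff.mp hA).1
    have hHdisj : ∀ A ∈ H, Disjoint A M := by
      intro A hA
      obtain ⟨hAF, hAnG⟩ := Finset.mem_sdiff.mp hA
      have hAnsub : ¬ A ⊆ M := fun h => hAnG (Finset.mem_filter.mpr ⟨hAF, h⟩)
      rcases hlam A hAF M hM with h | h | h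
      · exact absurd h hAnsub
      · exfalso
        have : A = M := (Finset.eq_of_subset_of_card_le h (hMmax A hAF)).symm
        exact hAnsub (this ▸ le_refl M)
      · exact h
    have huG : G.sup id = M :=
      le_antisymm (Finset.sup_le fun A hA => (Finset.mem_filter.mp hA).2)
        (Finset.le_sup (f := id) hMG)
    have hMu : M ⊆ F.sup id := Finset.le_sup (f := id) hM
    by_cases hH : H.Nonempty
    · -- split into G and H
      have hHc : 1 ≤ H.card := Finset.card_pos.mpr hH
      have hGcard : G.card ≤ n := by omega
      have hHcard : H.card ≤ n := by omega
      have IHG := ih G hGcard ⟨M, hMG⟩ (fun A hA => h0 A (hGsub A hA))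
        (fun A hA B hB => hlam A (hGsub A hA) B (hGsub B hB))
      rw [huG, Finset.insert_eq_self.mpr hMG] at IHG
      have IHH := ih H hHcard hH (fun A hA => h0 A (hHsub A hA))
        (fun A hA B hB => hlam A (hHsub A hA) B (hHsub B hB))
      have hHle : H.card ≤ 2 * (H.sup id).card - 1 :=
        le_trans (Finset.card_le_card (Finset.subset_insert _ _)) IHH
      have hdisjMH : Disjoint M (H.sup id) := by
        rw [Finset.disjoint_sup_right]
        exact fun A hA => (hHdisj A hA).symm
      have hunion : M.card + (H.sup id).card ≤ (F.sup id).card := by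
        rw [← Finset.card_union_of_disjoint hdisjMH]
        exact Finset.card_le_card (Finset.union_subset hMu
          (Finset.sup_mono (Finset.sdiff_subset)))
      have hHsupne : 1 ≤ (H.sup id).card := by
        obtain ⟨A, hA⟩ := hH
        obtain ⟨a, ha⟩ := h0 A (hHsub A hA)
        exact Finset.card_pos.mpr ⟨a, Finset.le_sup (f := id) hA ha⟩
      have hins : (insert (F.sup id) F).card ≤ F.card + 1 := Finset.card_insert_le _ _
      omega
    · -- all of F is contained in M
      have hHe : H.card = 0 := by
        rw [Finset.not_nonempty_iff_eq_empty.mp hH]; rfl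
      have hFG : F = G :=
        (Finset.eq_of_subset_of_card_le hGsubF (by omega)).symm
      have hu : F.sup id = M := by rw [hFG]; exact huG
      rw [hu, Finset.insert_eq_self.mpr hM]
      set G' := F.erase M with hG'def
      have hG'card : G'.card = F.card - 1 := Finset.card_erase_of_mem hM
      have hFc : 1 ≤ F.card := Finset.card_pos.mpr hne
      by_cases hG' : G'.Nonempty
      · have hG'sub : ∀ A ∈ G', A ∈ F := fun A hA => Finset.mem_of_mem_erase hA
        have hG'cn : G'.card ≤ n := by omega
        have IHG' := ih G' hG'cn hG' (fun A hA => h0 A (hG'sub A hA))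
          (fun A hA B hB => hlam A (hG'sub A hA) B (hG'sub B hB))
        have hu'M : G'.sup id ≤ M := by
          refine Finset.sup_le fun A hA => ?_
          have : A ∈ G := hFG ▸ (hG'sub A hA)
          exact (Finset.mem_filter.mp this).2
        by_cases hu' : G'.sup id = M
        · have hMnG' : M ∉ G' := Finset.notMem_erase _ _
          have hcard : (insert M G').card = G'.card + 1 :=
            Finset.card_insert_of_notMem hMnG'
          rw [hu'] at IHG'
          omega
        · have hlt : (G'.sup id).card < M.card :=
            Finset.card_lt_card (lt_of_le_of_ne hu'M hu')
          have hG'le : G'.card ≤ 2 * (G'.sup id).card - 1 :=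
            le_trans (Finset.card_le_card (Finset.subset_insert _ _)) IHG'
          have hG'supne : 1 ≤ (G'.sup id).card := by
            obtain ⟨A, hA⟩ := hG'
            obtain ⟨a, ha⟩ := h0 A (hG'sub A hA)
            exact Finset.card_pos.mpr ⟨a, Finset.le_sup (f := id) hA ha⟩
          omega
      · have h1 : G'.card = 0 := by
          rw [Finset.not_nonempty_iff_eq_empty.mp hG']; rfl
        omega

/-- A communicating class of a parameterized Markov chain `P`. -/
def IsCommClass {S : Type*} [Fintype S] (P : ℝ → S → S → ℝ) (B : Set S) : Prop :=
  B.Nonempty ∧ ∀ s ∈ B, ∀ s' ∈ B,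
    Tendsto (fun ε => ExitBefore (P ε) B s' s) (nhdsWithin 0 (Set.Ioi 0)) (nhds 0) ∧
    Tendsto (fun ε => ReachProb (P ε) s' s) (nhdsWithin 0 (Set.Ioi 0)) (nhds 1)

lemma commClass_nested_or_disjoint {S : Type*} [Fintype S]
    (P : ℝ → S → S → ℝ) (ε₀ : ℝ) (hε₀ : 0 < ε₀)
    (hP : ∀ ε, 0 < ε → ε < ε₀ →
      (∀ s s', 0 ≤ P ε s s') ∧ ∀ s, (∑ s', P ε s s') = 1)
    {B₁ B₂ : Set S} (h₁ : IsCommClass P B₁) (h₂ : IsCommClass P B₂) :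
    B₁ ⊆ B₂ ∨ B₂ ⊆ B₁ ∨ Disjoint B₁ B₂ := by
  by_cases hd : Disjoint B₁ B₂
  · exact Or.inr (Or.inr hd)
  obtain ⟨s, hs1, hs2⟩ := Set.not_disjoint_iff.mp hd
  by_cases h12 : B₁ ⊆ B₂
  · exact Or.inl h12
  refine Or.inr (Or.inl ?_)
  by_contra h21
  obtain ⟨x, hx1, hx2⟩ := Set.not_subset.mp h12
  obtain ⟨y, hy2, hy1⟩ := Set.not_subset.mp h21
  have hreach := (h₁.2 s hs1 x hx1).2
  have hexit1 := (h₁.2 s hs1 x hx1).1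
  have hexit2 := (h₂.2 s hs2 y hy2).1
  have hev : ∀ᶠ ε in nhdsWithin (0:ℝ) (Set.Ioi 0),
      ReachProb (P ε) x s ≤ ExitBefore (P ε) B₁ x s + ExitBefore (P ε) B₂ y s := by
    filter_upwards [Ioo_mem_nhdsGT_of_mem (Set.mem_Ico.mpr ⟨le_refl (0:ℝ), hε₀⟩)] with ε hε
    exact ReachProb_le_add ((hP ε hε.1 hε.2).1) ((hP ε hε.1 hε.2).2) hx2 hy1 s
  have hle : (1:ℝ) ≤ 0 + 0 := le_of_tendsto_of_tendsto hreach (hexit1.add hexit2) hev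
  linarith

/-- A parameterized Markov chain on a nonempty finite state space `S` has at most
`2|S| - 1` distinct communicating classes. -/
theorem commClasses_card_le {S : Type*} [Fintype S] [Nonempty S]
    (P : ℝ → S → S → ℝ) (ε₀ : ℝ) (hε₀ : 0 < ε₀)
    (hP : ∀ ε, 0 < ε → ε < ε₀ →
      (∀ s s', 0 ≤ P ε s s') ∧ ∀ s, (∑ s', P ε s s') = 1) :
    {B : Set S | IsCommClass P B}.ncard ≤ 2 * Fintype.card S - 1 := by
  classical
  set C : Set (Set S) := {B | IsCommClass P B} with hC
  have hfin : C.Finite := Set.toFinite C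
  set F : Finset (Finset S) := hfin.toFinset.image (fun B => B.toFinset) with hF
  have hcard : C.ncard = F.card := by
    rw [Set.ncard_eq_toFinset_card C hfin]
    exact (Finset.card_image_of_injective _ (fun a b h => Set.toFinset_inj.mp h)).symm
  rw [hcard]
  rcases F.eq_empty_or_nonempty with hFe | hFne
  · rw [hFe]; simp
  have hmem : ∀ A ∈ F, ∃ B : Set S, IsCommClass P B ∧ A = B.toFinset := by
    intro A hA
    obtain ⟨B, hB, rfl⟩ := Finset.mem_image.mp hA
    exact ⟨B, hfin.mem_toFinset.mp hB, rfl⟩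
  have h0 : ∀ A ∈ F, A.Nonempty := by
    intro A hA
    obtain ⟨B, hB, rfl⟩ := hmem A hA
    exact Set.toFinset_nonempty.mpr hB.1
  have hlam : ∀ A ∈ F, ∀ A' ∈ F, A ⊆ A' ∨ A' ⊆ A ∨ Disjoint A A' := by
    intro A hA A' hA'
    obtain ⟨B, hB, rfl⟩ := hmem A hA
    obtain ⟨B', hB', rfl⟩ := hmem A' hA'
    rcases commClass_nested_or_disjoint P ε₀ hε₀ hP hB hB' with h | h | h
    · exact Or.inl (Set.toFinset_subset_toFinset.mpr h)
    · exact Or.inr (Or.inl (Set.toFinset_subset_toFinset.mpr h))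
    · exact Or.inr (Or.inr (Set.disjoint_toFinset.mpr h))
  have hmain := laminar_card F.card F (le_refl _) hFne h0 hlam
  have h1 : F.card ≤ (insert (F.sup id) F).card :=
    Finset.card_le_card (Finset.subset_insert _ _)
  have h2 : (F.sup id).card ≤ Fintype.card S := Finset.card_le_univ _
  omega
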